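/- Let u and v be nonadjacent vertices of a graph G with γ(G_{u,v,4}) = γ(G), where G_{u,v,4} adds a path with four internal vertices between u and v. Then γ(G_{u,v,5}) = γ(G) + 1, where G_{u,v,5} adds a path with five internal vertices between u and v. -/

import Mathlib

/-!
Extending a minimum dominating set of `G_{u,v,4}` by the new path vertex next to `v` dominates
`G_{u,v,5}`, so `γ(G_{u,v,5}) ≤ γ(G_{u,v,4}) + 1 = γ(G) + 1`.
Conversely, for `k ≥ 5` a dominating set of `G_{u,v,k}` must contain one of the path vertices
`1, 2, 3` (to dominate vertex `2`), none of which has a neighbour in `G`. Dropping it and moving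
every other path vertex onto `u` or `v` leaves a dominating set of `G`, so
`γ(G) + 1 ≤ γ(G_{u,v,k})`.
-/

/-- `D` is a dominating set of `G`: every vertex not in `D` has a neighbor in `D`. -/
def isDomSet {V : Type*} (G : SimpleGraph V) (D : Finset V) : Prop :=
  ∀ v, v ∉ D → ∃ u ∈ D, G.Adj u v

/-- The domination number: minimum cardinality of a dominating set. -/
noncomputable def domNum {V : Type*} (G : SimpleGraph V) : ℕ :=
  sInf {n | ∃ D : Finset V, D.card = n ∧ isDomSet G D}

/-- The `(u,v)`-path-addition graph `G_{u,v,k}`: add an internally disjoint path with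
`k` internal vertices between `u` and `v`. -/
noncomputable def pathAdd {V : Type*} (G : SimpleGraph V) (u v : V) (k : ℕ) :
    SimpleGraph (V ⊕ Fin k) :=
  SimpleGraph.fromRel (fun a b =>
    match a, b with
    | Sum.inl x, Sum.inl y => G.Adj x y
    | Sum.inl x, Sum.inr i => (x = u ∧ (i : ℕ) = 0) ∨ (x = v ∧ (i : ℕ) = k - 1)
    | Sum.inr _, Sum.inl _ => False
    | Sum.inr i, Sum.inr j => (j : ℕ) = (i : ℕ) + 1)

open Finset

section DominationNumber

variable {V : Type*} (G : SimpleGraph V)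

theorem domNum_le_card {D : Finset V} (hD : isDomSet G D) : domNum G ≤ D.card :=
  Nat.sInf_le ⟨D, rfl, hD⟩

theorem exists_isDomSet_card_eq_domNum [Fintype V] :
    ∃ D : Finset V, D.card = domNum G ∧ isDomSet G D :=
  Nat.sInf_mem (s := {n | ∃ D : Finset V, D.card = n ∧ isDomSet G D})
    ⟨_, univ, rfl, fun w hw => absurd (mem_univ w) hw⟩

end DominationNumber

section PathAddition

variable {V : Type*} (G : SimpleGraph V) (u v : V) (k : ℕ)

@[simp]
theorem pathAdd_adj_inl_inl (x y : V) : (pathAdd G u v k).Adj (.inl x) (.inl y) ↔ G.Adj x y := by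
  simp only [pathAdd, SimpleGraph.fromRel_adj]
  exact ⟨fun h => h.2.elim id G.adj_symm, fun h => ⟨by simpa using h.ne, .inl h⟩⟩

@[simp]
theorem pathAdd_adj_inl_inr (x : V) (i : Fin k) :
    (pathAdd G u v k).Adj (.inl x) (.inr i) ↔
      (x = u ∧ (i : ℕ) = 0) ∨ (x = v ∧ (i : ℕ) = k - 1) := by
  simp [pathAdd]

@[simp]
theorem pathAdd_adj_inr_inl (i : Fin k) (x : V) :
    (pathAdd G u v k).Adj (.inr i) (.inl x) ↔
      (x = u ∧ (i : ℕ) = 0) ∨ (x = v ∧ (i : ℕ) = k - 1) := by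
  rw [SimpleGraph.adj_comm, pathAdd_adj_inl_inr]

@[simp]
theorem pathAdd_adj_inr_inr (i j : Fin k) :
    (pathAdd G u v k).Adj (.inr i) (.inr j) ↔ (j : ℕ) = i + 1 ∨ (i : ℕ) = j + 1 := by
  simp only [pathAdd, SimpleGraph.fromRel_adj, ne_eq, Sum.inr.injEq, Fin.ext_iff]
  omega

theorem isDomSet_pathAdd_succ [DecidableEq V] {D : Finset (V ⊕ Fin k)}
    (hD : isDomSet (pathAdd G u v k) D) :
    isDomSet (pathAdd G u v (k + 1))
      (insert (Sum.inr (Fin.last k)) (D.image (Sum.map id Fin.castSucc))) := by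
  have hmem : ∀ a ∈ D, Sum.map id Fin.castSucc a ∈
      insert (Sum.inr (Fin.last k)) (D.image (Sum.map id Fin.castSucc)) :=
    fun a ha => mem_insert_of_mem (mem_image_of_mem _ ha)
  intro x hx
  rcases x with y | j
  · obtain ⟨d, hd, hadj⟩ := hD (.inl y) fun h => hx (hmem _ h)
    rcases d with z | i
    · exact ⟨.inl z, hmem _ hd, by simpa using hadj⟩
    · rcases (pathAdd_adj_inr_inl ..).1 hadj with ⟨rfl, hi⟩ | ⟨rfl, -⟩
      · exact ⟨.inr i.castSucc, hmem _ hd, by simp [hi]⟩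
      · exact ⟨.inr (Fin.last k), mem_insert_self _ _, by simp⟩
  · induction j using Fin.lastCases with
    | last => exact absurd (mem_insert_self _ _) hx
    | cast j =>
      obtain ⟨d, hd, hadj⟩ := hD (.inr j) fun h => hx (hmem _ h)
      rcases d with z | i
      · rcases (pathAdd_adj_inl_inr ..).1 hadj with ⟨rfl, hj⟩ | ⟨rfl, hj⟩
        · exact ⟨.inl _, hmem _ hd, by simp [hj]⟩
        · refine ⟨.inr (Fin.last k), mem_insert_self _ _, ?_⟩
          simp only [pathAdd_adj_inr_inr, Fin.val_castSucc, Fin.val_last]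
          omega
      · exact ⟨.inr i.castSucc, hmem _ hd, by simpa using hadj⟩

theorem domNum_pathAdd_succ_le [Fintype V] :
    domNum (pathAdd G u v (k + 1)) ≤ domNum (pathAdd G u v k) + 1 := by
  classical
  obtain ⟨D, hcard, hD⟩ := exists_isDomSet_card_eq_domNum (pathAdd G u v k)
  calc domNum (pathAdd G u v (k + 1))
      _ ≤ _ := domNum_le_card _ (isDomSet_pathAdd_succ G u v k hD)
      _ ≤ (D.image (Sum.map id Fin.castSucc)).card + 1 := card_insert_le _ _
      _ ≤ domNum (pathAdd G u v k) + 1 := by rw [← hcard]; gcongr; exact card_image_le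

/-- For `k ≥ 2`, sends each path vertex that has a neighbour in `G` to that neighbour. -/
def pathCollapse : V ⊕ Fin k → V :=
  Sum.elim id fun i => if (i : ℕ) = 0 then u else v

theorem isDomSet_image_pathCollapse [DecidableEq V] {D : Finset (V ⊕ Fin k)}
    (hD : isDomSet (pathAdd G u v k) D) {m : Fin k} (hm₀ : (m : ℕ) ≠ 0)
    (hm₁ : (m : ℕ) ≠ k - 1) :
    isDomSet G ((D.erase (.inr m)).image (pathCollapse u v k)) := by
  have hmem : ∀ a ∈ D, a ≠ .inr m →
      pathCollapse u v k a ∈ (D.erase (.inr m)).image (pathCollapse u v k) :=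
    fun a ha hne => mem_image_of_mem _ (mem_erase.2 ⟨hne, ha⟩)
  intro x hx
  obtain ⟨d, hd, hadj⟩ := hD (.inl x) fun h => hx (hmem _ h Sum.inl_ne_inr)
  rcases d with z | i
  · exact ⟨z, hmem _ hd Sum.inl_ne_inr, by simpa using hadj⟩
  · refine absurd ?_ hx
    have him : (Sum.inr i : V ⊕ Fin k) ≠ .inr m := by
      rw [ne_eq, Sum.inr.injEq, Fin.ext_iff]
      rcases (pathAdd_adj_inr_inl ..).1 hadj with ⟨-, hi⟩ | ⟨-, hi⟩ <;> omega
    rcases (pathAdd_adj_inr_inl ..).1 hadj with ⟨rfl, hi⟩ | ⟨rfl, hi⟩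
    · simpa [pathCollapse, hi] using hmem _ hd him
    · simpa [pathCollapse, hi, show k - 1 ≠ 0 by omega] using hmem _ hd him

theorem exists_inner_mem_of_isDomSet_pathAdd (hk : 5 ≤ k) {D : Finset (V ⊕ Fin k)}
    (hD : isDomSet (pathAdd G u v k) D) :
    ∃ m : Fin k, .inr m ∈ D ∧ (m : ℕ) ≠ 0 ∧ (m : ℕ) ≠ k - 1 := by
  by_cases h₂ : .inr ⟨2, by omega⟩ ∈ D
  · exact ⟨_, h₂, by dsimp only; omega, by dsimp only; omega⟩
  obtain ⟨d, hd, hadj⟩ := hD _ h₂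
  rcases d with z | i
  · rcases (pathAdd_adj_inl_inr ..).1 hadj with ⟨-, h⟩ | ⟨-, h⟩ <;>
      dsimp only at h <;> omega
  · rw [pathAdd_adj_inr_inr] at hadj; dsimp only at hadj
    exact ⟨i, hd, by omega, by omega⟩

theorem domNum_add_one_le_domNum_pathAdd [Fintype V] (hk : 5 ≤ k) :
    domNum G + 1 ≤ domNum (pathAdd G u v k) := by
  classical
  obtain ⟨D, hcard, hD⟩ := exists_isDomSet_card_eq_domNum (pathAdd G u v k)
  obtain ⟨m, hm, hm₀, hm₁⟩ := exists_inner_mem_of_isDomSet_pathAdd G u v k hk hD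
  calc domNum G + 1
      _ ≤ ((D.erase (.inr m)).image (pathCollapse u v k)).card + 1 := by
        gcongr
        exact domNum_le_card G (isDomSet_image_pathCollapse G u v k hD hm₀ hm₁)
      _ ≤ (D.erase (.inr m)).card + 1 := by gcongr; exact card_image_le
      _ = domNum (pathAdd G u v k) := by rw [card_erase_add_one hm, hcard]

end PathAddition

theorem stmt19_general {V : Type*} [Fintype V] (G : SimpleGraph V) (u v : V)
    (h4 : domNum (pathAdd G u v 4) = domNum G) :
    domNum (pathAdd G u v 5) = domNum G + 1 :=
  le_antisymm (h4 ▸ domNum_pathAdd_succ_le G u v 4)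
    (domNum_add_one_le_domNum_pathAdd G u v 5 le_rfl)

theorem stmt19 {V : Type*} [Fintype V] (G : SimpleGraph V) (u v : V)
    (hne : u ≠ v) (h : ¬G.Adj u v)
    (h4 : domNum (pathAdd G u v 4) = domNum G) :
    domNum (pathAdd G u v 5) = domNum G + 1 :=
  stmt19_general G u v h4
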